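/- Let (G_n)_{n≥1} be real-valued random variables adapted to a filtration, with Ψ = Π_{n=1}^∞ G_n where almost surely all but finitely many G_n equal 1, and suppose E[|Ψ|] < ∞ and E^{P_{n−1}}[|G_n|] ∈ (0,∞) for all n, where dP_n/dP_{n−1} = |G_n|/E^{P_{n−1}}[|G_n|]. Then E^{P_0}[Ψ] = (Π_{n=1}^∞ E^{P_{n−1}}[|G_n|]) · E^{P_∞}[Π_{n=1}^∞ sgn(G_n)], where P_∞ is the limit measure of the successive changes of measure. -/
import Mathlib


open MeasureTheory ProbabilityTheory Real Finset

/-- The sequence of successive changes of measure: `Q 0 = P` and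
`Q n` has density `|G_{n+1}|/E^{Q n}[|G_{n+1}|]` with respect to `Q (n-1)`. -/
noncomputable def resamplingMeasure {Ω : Type*} [MeasurableSpace Ω] (P : Measure Ω)
    (G : ℕ → Ω → ℝ) : ℕ → Measure Ω
  | 0 => P
  | (n + 1) =>
      (resamplingMeasure P G n).withDensity
        (fun ω => ENNReal.ofReal
          (|G (n + 1) ω| / ∫ ω', |G (n + 1) ω'| ∂(resamplingMeasure P G n)))


lemma real_sign_mul_abs (x : ℝ) : Real.sign x * |x| = x := by
  rcases lt_trichotomy x 0 with h | h | h
  · rw [Real.sign_of_neg h, abs_of_neg h]; ring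
  · simp [h]
  · rw [Real.sign_of_pos h, abs_of_pos h]; ring

lemma resampling_step {Ω : Type*} [MeasurableSpace Ω] (μ : Measure Ω) (g : Ω → ℝ)
    (hg : Measurable g) (c : ℝ) (hc : 0 < c) (F : Ω → ℝ) :
    c * ∫ ω, F ω ∂(μ.withDensity (fun ω => ENNReal.ofReal (|g ω| / c)))
      = ∫ ω, |g ω| * F ω ∂μ := by
  have hmeas : Measurable fun ω => (|g ω| / c).toNNReal :=
    (hg.abs.div_const c).real_toNNReal
  have h1 : (μ.withDensity (fun ω => ENNReal.ofReal (|g ω| / c)))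
      = μ.withDensity (fun ω => ((|g ω| / c).toNNReal : ENNReal)) := rfl
  rw [h1, integral_withDensity_eq_integral_smul hmeas]
  have h2 : ∀ ω, ((|g ω| / c).toNNReal : ℝ) • F ω = (1 / c) * (|g ω| * F ω) := by
    intro ω
    rw [Real.coe_toNNReal _ (by positivity), smul_eq_mul]
    ring
  simp_rw [NNReal.smul_def, h2]
  rw [integral_const_mul]
  field_simp

/-- Sequential change of measure (resampling) identity: for `Ψ = Π_{n≥1} G_n` with
`G_n = 1` for `n > N`, `E[|Ψ|] < ∞` and `E^{P_{n−1}}[|G_n|] ∈ (0,∞)`,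
`E^{P_0}[Ψ] = (Π_n E^{P_{n−1}}[|G_n|]) · E^{P_∞}[Π_n sgn(G_n)]`, where `P_∞ = P_N` is the
limit of the successive changes of measure. -/
theorem stmt_17 {Ω : Type*} [MeasurableSpace Ω] (P : Measure Ω) [IsProbabilityMeasure P]
    (G : ℕ → Ω → ℝ) (hGm : ∀ n, Measurable (G n))
    (N : ℕ) (htail : ∀ n > N, ∀ ω, G n ω = 1)
    (hΨint : Integrable (fun ω => ∏ n ∈ Finset.range N, G (n + 1) ω) P)
    (hGint : ∀ n ∈ Finset.range N,
      Integrable (fun ω => |G (n + 1) ω|) (resamplingMeasure P G n))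
    (hGpos : ∀ n ∈ Finset.range N,
      0 < ∫ ω, |G (n + 1) ω| ∂(resamplingMeasure P G n)) :
    ∫ ω, ∏ n ∈ Finset.range N, G (n + 1) ω ∂P
      = (∏ n ∈ Finset.range N, ∫ ω, |G (n + 1) ω| ∂(resamplingMeasure P G n)) *
        ∫ ω, ∏ n ∈ Finset.range N, Real.sign (G (n + 1) ω) ∂(resamplingMeasure P G N) := by
  suffices h : ∀ m, m ≤ N →
      ∫ ω, ∏ n ∈ Finset.range N, G (n + 1) ω ∂P
        = (∏ n ∈ Finset.range m, ∫ ω, |G (n + 1) ω| ∂(resamplingMeasure P G n)) *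
          ∫ ω, (∏ n ∈ Finset.range m, Real.sign (G (n + 1) ω)) *
            ∏ n ∈ Finset.Ico m N, G (n + 1) ω ∂(resamplingMeasure P G m) by
    have := h N le_rfl
    simpa using this
  intro m hm
  induction m with
  | zero => simp [resamplingMeasure, ← Finset.range_eq_Ico]
  | succ k ih =>
    have hk : k < N := hm
    set Q := resamplingMeasure P G k with hQ
    set c := ∫ ω, |G (k + 1) ω| ∂Q with hc
    have hcpos : 0 < c := hGpos k (Finset.mem_range.mpr hk)
    have hmeas : resamplingMeasure P G (k + 1)
        = Q.withDensity (fun ω => ENNReal.ofReal (|G (k + 1) ω| / c)) := by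
      rw [hQ, hc]; rfl
    have key : ∫ ω, (∏ n ∈ Finset.range k, Real.sign (G (n + 1) ω)) *
          ∏ n ∈ Finset.Ico k N, G (n + 1) ω ∂Q
        = c * ∫ ω, (∏ n ∈ Finset.range (k+1), Real.sign (G (n + 1) ω)) *
            ∏ n ∈ Finset.Ico (k+1) N, G (n + 1) ω ∂(resamplingMeasure P G (k+1)) := by
      rw [hmeas, resampling_step Q (G (k+1)) (hGm (k+1)) c hcpos]
      refine integral_congr_ae (Filter.Eventually.of_forall fun ω => ?_)
      dsimp only
      rw [Finset.prod_eq_prod_Ico_succ_bot hk, Finset.prod_range_succ]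
      conv_lhs => rw [← real_sign_mul_abs (G (k + 1) ω)]
      ring
    rw [ih hk.le, key, Finset.prod_range_succ]
    ring
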